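/- arXiv:2008.04018 — 4 statements merged into one kernel-verified Lean document; each statement's English description precedes it below -/
import Mathlib

section
/- Let k ≥ 1 and let u₀, u₁, …, u_{k+1} ∈ ℤ² satisfy det(u_{i−1}, u_i) = 1 for all 1 ≤ i ≤ k+1, and let λ₁,…,λ_k be integers with u_{i−1} + u_{i+1} = λ_i · u_i for all 1 ≤ i ≤ k. Let A_k be the k×k tridiagonal matrix with diagonal entries λ₁,…,λ_k, entries −1 on the first super- and subdiagonal, and 0 elsewhere. Then det(A_k) = det(u₀, u_{k+1}). -/
/-!
Both sides satisfy the recurrence `x (j + 2) = λ_{j+2} x (j + 1) - x j`: the determinants by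
Laplace expansion along the last row, and `det(u₀, u_{j+1})` because `det(u₀, ·)` is linear and
`u_{j+1} + u_{j+3} = λ_{j+2} u_{j+2}`. Both start with `1, λ₁` since `det(u₀, u₁) = 1`.
-/

/-- The planar determinant `det(u,w) = u¹w² − u²w¹`. -/
def det2 (u w : ℤ × ℤ) : ℤ := u.1 * w.2 - u.2 * w.1

/-- The `j × j` tridiagonal matrix with diagonal entries `lam 1, …, lam j`,
entries `-1` on the first super- and subdiagonal, and `0` elsewhere. -/
def tridiag (lam : ℕ → ℝ) (j : ℕ) : Matrix (Fin j) (Fin j) ℝ :=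
  Matrix.of fun i i' =>
    if (i : ℕ) = (i' : ℕ) then lam ((i : ℕ) + 1)
    else if (i : ℕ) + 1 = (i' : ℕ) ∨ (i' : ℕ) + 1 = (i : ℕ) then -1
    else 0

theorem tridiag_apply_eq_zero {lam : ℕ → ℝ} {n : ℕ} {i j : Fin n}
    (h : (i : ℕ) + 1 < j ∨ (j : ℕ) + 1 < i) : tridiag lam n i j = 0 := by
  simp only [tridiag, Matrix.of_apply]
  rw [if_neg (by omega), if_neg (by omega)]

theorem tridiag_submatrix_castSucc (lam : ℕ → ℝ) (n : ℕ) :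
    (tridiag lam (n + 1)).submatrix Fin.castSucc Fin.castSucc = tridiag lam n := by
  ext i j
  simp only [tridiag, Matrix.submatrix_apply, Matrix.of_apply, Fin.val_castSucc]

theorem det_tridiag_submatrix_castSucc_succAbove (lam : ℕ → ℝ) (n : ℕ) :
    ((tridiag lam (n + 2)).submatrix Fin.castSucc (Fin.last n).castSucc.succAbove).det =
      -(tridiag lam n).det := by
  set B := (tridiag lam (n + 2)).submatrix Fin.castSucc (Fin.last n).castSucc.succAbove
  have hminor : B.submatrix Fin.castSucc Fin.castSucc = tridiag lam n := by
    ext i j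
    simp only [B, Matrix.submatrix_apply, Fin.succAbove_castSucc_of_lt _ _ j.castSucc_lt_last]
    simp only [tridiag, Matrix.of_apply, Fin.val_castSucc]
  have hentry : B (Fin.last n) (Fin.last n) = -1 := by simp [B, tridiag]
  rw [Matrix.det_succ_column _ (Fin.last _), Fin.sum_univ_castSucc, Finset.sum_eq_zero]
  · simp [Fin.succAbove_last, hminor, hentry]
  · intro j _
    have hentry : B j.castSucc (Fin.last n) = 0 := tridiag_apply_eq_zero (by simp)
    simp [hentry]

theorem det_tridiag_succ_succ (lam : ℕ → ℝ) (n : ℕ) :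
    (tridiag lam (n + 2)).det = lam (n + 2) * (tridiag lam (n + 1)).det - (tridiag lam n).det := by
  set A := tridiag lam (n + 2)
  have hentry₁ : A (Fin.last (n + 1)) (Fin.last n).castSucc = -1 := by simp [A, tridiag]
  have hentry₂ : A (Fin.last (n + 1)) (Fin.last (n + 1)) = lam (n + 2) := by simp [A, tridiag]
  rw [Matrix.det_succ_row _ (Fin.last _), Fin.sum_univ_castSucc, Fin.sum_univ_castSucc,
    Finset.sum_eq_zero]
  · simp only [Fin.val_last, Fin.val_castSucc, odd_add_one_self, Odd.neg_one_pow, hentry₁,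
      mul_neg, mul_one, neg_neg, Fin.succAbove_last, det_tridiag_submatrix_castSucc_succAbove,
      one_mul, zero_add, Even.add_self, Even.neg_pow, one_pow, hentry₂,
      tridiag_submatrix_castSucc, A]
    ring
  · intro j _
    have hentry : A (Fin.last (n + 1)) j.castSucc.castSucc = 0 := tridiag_apply_eq_zero (by simp)
    simp [hentry]

theorem det2_self (a : ℤ × ℤ) : det2 a a = 0 := by
  rw [det2, mul_comm, sub_self]

theorem det2_eq_of_add_eq_smul {a u v w : ℤ × ℤ} {c : ℤ} (h : v + w = c • u) :
    det2 a w = c * det2 a u - det2 a v := by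
  obtain rfl : w = c • u - v := eq_sub_of_add_eq' h
  simp only [det2, Prod.fst_sub, Prod.snd_sub, Prod.smul_fst, Prod.smul_snd, smul_eq_mul]
  ring

theorem det_tridiag_eq_det2_of_recurrence (k : ℕ) (u : ℕ → ℤ × ℤ) (lam : ℕ → ℤ)
    (h0 : det2 (u 0) (u 1) = 1)
    (hrec : ∀ i, 1 ≤ i → i ≤ k → u (i - 1) + u (i + 1) = lam i • u i) :
    (tridiag (fun i => (lam i : ℝ)) k).det = (det2 (u 0) (u (k + 1)) : ℝ) := by
  induction k using Nat.twoStepInduction with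
  | zero => simp [h0]
  | one =>
    rw [det2_eq_of_add_eq_smul (hrec 1 le_rfl le_rfl), h0, det2_self]
    simp [tridiag]
  | more n ih₀ ih₁ =>
    rw [det_tridiag_succ_succ, ih₀ fun i h₁ h₂ => hrec i h₁ (by omega),
      ih₁ fun i h₁ h₂ => hrec i h₁ (by omega),
      det2_eq_of_add_eq_smul (hrec (n + 2) (by omega) le_rfl)]
    push_cast
    ring

theorem det_tridiag_eq_det2_general (k : ℕ) (u : ℕ → ℤ × ℤ) (lam : ℕ → ℤ)
    (hdet : ∀ i ≤ k, det2 (u i) (u (i + 1)) = 1)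
    (hrec : ∀ i, 1 ≤ i → i ≤ k → u (i - 1) + u (i + 1) = lam i • u i) :
    (tridiag (fun i => (lam i : ℝ)) k).det = (det2 (u 0) (u (k + 1)) : ℝ) :=
  det_tridiag_eq_det2_of_recurrence k u lam (hdet 0 k.zero_le) hrec

/-- If `det(u_{i−1}, u_i) = 1` for `1 ≤ i ≤ k+1` and
`u_{i−1} + u_{i+1} = λ_i · u_i` for `1 ≤ i ≤ k`, then
`det(A_k) = det(u₀, u_{k+1})`. -/
theorem det_tridiag_eq_det2 (k : ℕ) (hk : 1 ≤ k) (u : ℕ → ℤ × ℤ) (lam : ℕ → ℤ)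
    (hdet : ∀ i ≤ k, det2 (u i) (u (i + 1)) = 1)
    (hrec : ∀ i, 1 ≤ i → i ≤ k → u (i - 1) + u (i + 1) = lam i • u i) :
    (tridiag (fun i => (lam i : ℝ)) k).det = (det2 (u 0) (u (k + 1)) : ℝ) :=
  det_tridiag_eq_det2_general k u lam hdet hrec
end

section
/- Let I be a finite index set, u : I → ℝ², a : I → ℝ, v ∈ ℝ², and t ≥ 0 a real number. Set P = {m ∈ ℝ² : ⟨m, u_i⟩ ≥ −a_i for all i ∈ I}. Then the following three subsets of ℝ² coincide: (1) the translate {m ∈ ℝ² : ⟨m, u_i⟩ ≥ −(a_i + t·min(0, ⟨v, u_i⟩)) for all i ∈ I} + t·v; (2) the intersection P ∩ (P + t·v); (3) the set {m ∈ ℝ² : ⟨m, u_i⟩ ≥ −a_i + max(0, t·⟨v, u_i⟩) for all i ∈ I}. -/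
/-!
Translating `{m | ∀ i, b i ≤ ⟨m, u i⟩}` by `w` replaces each constant `b i` by `b i + ⟨w, u i⟩`,
and intersecting two such systems takes the pointwise maximum of their constants. All three sets
are therefore described by inequalities against the same normals `u i`, and the theorem reduces
to the scalar identities `-(a + t min(0, x)) + t x = -a + max(0, t x) = max(-a, -a + t x)`.
-/

/-- The standard inner product on `ℝ²`. -/
def dotR (m w : ℝ × ℝ) : ℝ := m.1 * w.1 + m.2 * w.2

theorem image_add_right_setOf_le {ι E β : Type*} [AddGroup E] [AddCommGroup β] [PartialOrder β]
    [IsOrderedAddMonoid β] (f : ι → E →+ β) (b : ι → β) (w : E) :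
    (fun m => m + w) '' {m | ∀ i, b i ≤ f i m} = {m | ∀ i, b i + f i w ≤ f i m} := by
  ext m
  simp [Set.image_add_right, ← le_sub_iff_add_le]

theorem setOf_le_inter_setOf_le {ι E β : Type*} [LinearOrder β] (f : ι → E → β) (b c : ι → β) :
    {m | ∀ i, b i ≤ f i m} ∩ {m | ∀ i, c i ≤ f i m} = {m | ∀ i, max (b i) (c i) ≤ f i m} := by
  ext m
  simp only [Set.mem_inter_iff, Set.mem_ofPred_eq, max_le_iff, forall_and]

@[simps]
def dotRAddMonoidHom (w : ℝ × ℝ) : ℝ × ℝ →+ ℝ where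
  toFun m := dotR m w
  map_zero' := by simp [dotR]
  map_add' m n := by simp only [dotR, Prod.fst_add, Prod.snd_add]; ring

theorem dotR_smul_left (t : ℝ) (m w : ℝ × ℝ) : dotR (t • m) w = t * dotR m w := by
  simp only [dotR, Prod.smul_fst, Prod.smul_snd, smul_eq_mul]; ring

theorem neg_add_mul_min_zero_add_mul {t : ℝ} (ht : 0 ≤ t) (a x : ℝ) :
    -(a + t * min 0 x) + t * x = -a + max 0 (t * x) := by
  rw [mul_min_of_nonneg _ _ ht, mul_zero]
  rcases le_total 0 (t * x) with h | h <;> simp [h]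

theorem intersection_translate_eq_general {I : Type*}
    (u : I → ℝ × ℝ) (a : I → ℝ) (v : ℝ × ℝ) (t : ℝ) (ht : 0 ≤ t) :
    ((fun m => m + t • v) ''
        {m : ℝ × ℝ | ∀ i, -(a i + t * min 0 (dotR v (u i))) ≤ dotR m (u i)}
      = {m : ℝ × ℝ | ∀ i, -a i ≤ dotR m (u i)} ∩
        ((fun m => m + t • v) '' {m : ℝ × ℝ | ∀ i, -a i ≤ dotR m (u i)})) ∧
    ({m : ℝ × ℝ | ∀ i, -a i ≤ dotR m (u i)} ∩
        ((fun m => m + t • v) '' {m : ℝ × ℝ | ∀ i, -a i ≤ dotR m (u i)})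
      = {m : ℝ × ℝ | ∀ i, -a i + max 0 (t * dotR v (u i)) ≤ dotR m (u i)}) := by
  have translate (b : I → ℝ) :=
    image_add_right_setOf_le (fun i => dotRAddMonoidHom (u i)) b (t • v)
  simp only [dotRAddMonoidHom_apply, dotR_smul_left] at translate
  rw [translate, translate, setOf_le_inter_setOf_le (fun i m => dotR m (u i))]
  simp only [neg_add_mul_min_zero_add_mul ht, ← max_add_add_left, add_zero, and_self]

/-- The three descriptions of `P ∩ (P + t·v)` coincide:
(1) the translate by `t·v` of the polyhedron with relaxed constants
`a_i + t·min(0, ⟨v,u_i⟩)`; (2) `P ∩ (P + t·v)`; (3) the polyhedron with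
constants `−a_i + max(0, t·⟨v,u_i⟩)`. -/
theorem intersection_translate_eq {I : Type*} [Finite I]
    (u : I → ℝ × ℝ) (a : I → ℝ) (v : ℝ × ℝ) (t : ℝ) (ht : 0 ≤ t) :
    ((fun m => m + t • v) ''
        {m : ℝ × ℝ | ∀ i, -(a i + t * min 0 (dotR v (u i))) ≤ dotR m (u i)}
      = {m : ℝ × ℝ | ∀ i, -a i ≤ dotR m (u i)} ∩
        ((fun m => m + t • v) '' {m : ℝ × ℝ | ∀ i, -a i ≤ dotR m (u i)})) ∧
    ({m : ℝ × ℝ | ∀ i, -a i ≤ dotR m (u i)} ∩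
        ((fun m => m + t • v) '' {m : ℝ × ℝ | ∀ i, -a i ≤ dotR m (u i)})
      = {m : ℝ × ℝ | ∀ i, -a i + max 0 (t * dotR v (u i)) ≤ dotR m (u i)}) :=
  intersection_translate_eq_general u a v t ht
end

section
/- Let P ⊆ ℝ² be a compact convex set with nonempty interior. Let γ = min{y : (x,y) ∈ P}, δ = max{y : (x,y) ∈ P}, and for y ∈ [γ,δ] let ℓ(y) = min{x : (x,y) ∈ P} and r(y) = max{x : (x,y) ∈ P}. For t ≥ 0 with {y ∈ [γ,δ] : r(y) − ℓ(y) ≥ t} nonempty, let b(t) = min{y ∈ [γ,δ] : r(y) − ℓ(y) ≥ t} (this minimum exists), and let g(t) denote the one-dimensional Lebesgue measure of {y ∈ [γ,δ] : r(y) − ℓ(y) ≥ t}. Define Ψ : P → ℝ² by Ψ(x,y) = (x − ℓ(y), y − b(x − ℓ(y))). Then: (1) Ψ is injective on P; (2) the image Ψ(P) equals S = {(t,h) ∈ ℝ² : t ≥ 0, the set {y ∈ [γ,δ] : r(y) − ℓ(y) ≥ t} is nonempty, and 0 ≤ h ≤ g(t)}; (3) Ψ preserves area, i.e. for every Lebesgue-measurable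 A ⊆ P, the set Ψ(A) is measurable with the same two-dimensional Lebesgue measure as A. -/
open MeasureTheory

/-- The lowest `y`-coordinate of `P`. -/
noncomputable def gamP (P : Set (ℝ × ℝ)) : ℝ := sInf (Prod.snd '' P)

/-- The highest `y`-coordinate of `P`. -/
noncomputable def delP (P : Set (ℝ × ℝ)) : ℝ := sSup (Prod.snd '' P)

/-- The left endpoint `ℓ(y)` of the horizontal slice of `P` at height `y`. -/
noncomputable def lftP (P : Set (ℝ × ℝ)) (y : ℝ) : ℝ := sInf {x | (x, y) ∈ P}

/-- The right endpoint `r(y)` of the horizontal slice of `P` at height `y`. -/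
noncomputable def rgtP (P : Set (ℝ × ℝ)) (y : ℝ) : ℝ := sSup {x | (x, y) ∈ P}

/-- The superlevel set `{y ∈ [γ,δ] : r(y) − ℓ(y) ≥ t}`. -/
def lvlP (P : Set (ℝ × ℝ)) (t : ℝ) : Set ℝ :=
  {y | gamP P ≤ y ∧ y ≤ delP P ∧ t ≤ rgtP P y - lftP P y}

/-- `b(t)`, the least element of the superlevel set at level `t`. -/
noncomputable def bP (P : Set (ℝ × ℝ)) (t : ℝ) : ℝ := sInf (lvlP P t)

/-- `g(t)`, the one-dimensional Lebesgue measure of the superlevel set at level `t`. -/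
noncomputable def gP (P : Set (ℝ × ℝ)) (t : ℝ) : ℝ := (volume (lvlP P t)).toReal

/-- The double shear `Ψ(x,y) = (x − ℓ(y), y − b(x − ℓ(y)))`. -/
noncomputable def PsiP (P : Set (ℝ × ℝ)) (p : ℝ × ℝ) : ℝ × ℝ :=
  (p.1 - lftP P p.2, p.2 - bP P (p.1 - lftP P p.2))

/-!
`Ψ` is the composite of two shears. The horizontal shear `(x, y) ↦ (x - ℓ(y), y)` moves every
slice of `P` to `[0, r(y) - ℓ(y)]`, so the sheared body is `{(t, y) : t ≥ 0, y ∈ lvl(t)}`. Its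
vertical slices are the intervals `lvl(t) = [b(t), b(t) + g(t)]`, which the vertical shear
`(t, y) ↦ (t, y - b(t))` moves to `[0, g(t)]`. By Fubini, a shear along a measurable function
preserves Lebesgue measure; `ℓ` and `b` are measurable because they are infima of closed fibres
whose sublevel sets are projections of compact sets, respectively lower sets.
-/

open Set

section Shear

variable {α G : Type*} [MeasurableSpace α] [AddGroup G] [MeasurableSpace G] [MeasurableAdd₂ G]
  [MeasurableSub₂ G] {f : α → G}

def MeasurableEquiv.prodShearSub (hf : Measurable f) : α × G ≃ᵐ α × G where
  toEquiv := .prodShear (.refl α) fun a ↦ .subRight (f a)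
  measurable_toFun := measurable_fst.prodMk (measurable_snd.sub (hf.comp measurable_fst))
  measurable_invFun := measurable_fst.prodMk (measurable_snd.add (hf.comp measurable_fst))

theorem MeasureTheory.measurePreserving_prodShearSub (hf : Measurable f) (μ : Measure α)
    (ν : Measure G) [SFinite μ] [SFinite ν] [ν.IsAddRightInvariant] :
    MeasurePreserving (MeasurableEquiv.prodShearSub hf) (μ.prod ν) (μ.prod ν) :=
  (MeasurePreserving.id μ).skew_product (g := fun a y ↦ y - f a)
    (measurable_snd.sub (hf.comp measurable_fst))
    (.of_forall fun a ↦ (measurePreserving_sub_right ν (f a)).map_eq)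

end Shear

theorem measurable_sInf_of_isClosed {α : Type*} [MeasurableSpace α] {s : α → Set ℝ}
    (hcl : ∀ x, IsClosed (s x)) (hbdd : ∀ x, BddBelow (s x))
    (hs : ∀ a, MeasurableSet {x | (s x ∩ Iic a).Nonempty}) :
    Measurable fun x ↦ sInf (s x) := by
  have hne : {x | (s x).Nonempty} = ⋃ n : ℕ, {x | (s x ∩ Iic (n : ℝ)).Nonempty} := by
    ext x
    simp only [mem_ofPred_eq, mem_iUnion]
    exact ⟨fun ⟨y, hy⟩ ↦ (exists_nat_ge y).imp fun _ hn ↦ ⟨y, hy, hn⟩, fun ⟨_, y, hy, _⟩ ↦ ⟨y, hy⟩⟩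
  refine measurable_of_Iic fun a ↦ ?_
  -- the second part accounts for empty fibres, where `sInf ∅ = 0`
  have hpre : (fun x ↦ sInf (s x)) ⁻¹' Iic a =
      {x | (s x ∩ Iic a).Nonempty} ∪ ({x | (s x).Nonempty}ᶜ ∩ {_x | 0 ≤ a}) := by
    ext x
    rcases (s x).eq_empty_or_nonempty with h | h
    · simp [h]
    · simp only [mem_preimage, mem_Iic, mem_union, mem_ofPred_eq, mem_inter_iff, mem_compl_iff, h,
        not_true_eq_false, false_and, or_false]
      exact ⟨fun ha ↦ ⟨_, (hcl x).csInf_mem h (hbdd x), ha⟩,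
        fun ⟨y, hy, hya⟩ ↦ csInf_le_of_le (hbdd x) hy hya⟩
  rw [hpre, hne]
  exact (hs a).union ((MeasurableSet.iUnion fun n : ℕ ↦ hs n).compl.inter (.const _))

def sliceP (P : Set (ℝ × ℝ)) (y : ℝ) : Set ℝ := {x | (x, y) ∈ P}

section ConvexBody

variable {P : Set (ℝ × ℝ)} {x y t : ℝ}

theorem isCompact_sliceP (hP : IsCompact P) (y : ℝ) : IsCompact (sliceP P y) :=
  (hP.image continuous_fst).of_isClosed_subset
    (hP.isClosed.preimage (continuous_id.prodMk continuous_const)) fun _ hx ↦ ⟨_, hx, rfl⟩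

theorem convex_sliceP (hconv : Convex ℝ P) (y : ℝ) : Convex ℝ (sliceP P y) := by
  have h : sliceP P y = AffineMap.lineMap ((0 : ℝ), y) (1, y) ⁻¹' P := by
    ext x
    simp [sliceP, AffineMap.lineMap_apply]
  exact h ▸ hconv.affine_preimage _

theorem lftP_le (hP : IsCompact P) (h : (x, y) ∈ P) : lftP P y ≤ x :=
  csInf_le (isCompact_sliceP hP y).bddBelow h

theorem le_rgtP (hP : IsCompact P) (h : (x, y) ∈ P) : x ≤ rgtP P y :=
  le_csSup (isCompact_sliceP hP y).bddAbove h

theorem image_snd_eq_Icc (hP : IsCompact P) (hconv : Convex ℝ P) (hne : P.Nonempty) :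
    Prod.snd '' P = Icc (gamP P) (delP P) :=
  eq_Icc_of_connected_compact
    ((hconv.linear_image (LinearMap.snd ℝ ℝ ℝ)).isConnected (hne.image _))
    (hP.image continuous_snd)

theorem sliceP_nonempty (hP : IsCompact P) (hconv : Convex ℝ P) (hne : P.Nonempty)
    (hy : y ∈ Icc (gamP P) (delP P)) : (sliceP P y).Nonempty := by
  rw [← image_snd_eq_Icc hP hconv hne] at hy
  obtain ⟨p, hp, rfl⟩ := hy
  exact ⟨p.1, hp⟩

theorem sliceP_eq_Icc (hP : IsCompact P) (hconv : Convex ℝ P) (hne : P.Nonempty)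
    (hy : y ∈ Icc (gamP P) (delP P)) : sliceP P y = Icc (lftP P y) (rgtP P y) :=
  eq_Icc_of_connected_compact
    ((convex_sliceP hconv y).isConnected (sliceP_nonempty hP hconv hne hy))
    (isCompact_sliceP hP y)

theorem mem_lvlP_iff (hP : IsCompact P) (hconv : Convex ℝ P) (hne : P.Nonempty) (ht : 0 ≤ t) :
    y ∈ lvlP P t ↔ (lftP P y + t, y) ∈ P := by
  constructor
  · rintro ⟨hγ, hδ, hw⟩
    change lftP P y + t ∈ sliceP P y
    rw [sliceP_eq_Icc hP hconv hne ⟨hγ, hδ⟩]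
    constructor <;> linarith
  · intro h
    have hy : y ∈ Icc (gamP P) (delP P) := image_snd_eq_Icc hP hconv hne ▸ ⟨_, h, rfl⟩
    exact ⟨hy.1, hy.2, by linarith [le_rgtP hP h]⟩

-- `lvl(t)` is the set of heights at which `P` has two points at horizontal distance `≥ t`.
theorem lvlP_eq_image (hP : IsCompact P) (hconv : Convex ℝ P) (hne : P.Nonempty) (t : ℝ) :
    lvlP P t = (fun q : (ℝ × ℝ) × (ℝ × ℝ) ↦ q.1.2) ''
      (P ×ˢ P ∩ {q | q.1.2 = q.2.2 ∧ t ≤ q.2.1 - q.1.1}) := by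
  ext y
  constructor
  · rintro ⟨hγ, hδ, hw⟩
    have hs := sliceP_nonempty hP hconv hne ⟨hγ, hδ⟩
    exact ⟨((lftP P y, y), (rgtP P y, y)),
      ⟨⟨(isCompact_sliceP hP y).sInf_mem hs, (isCompact_sliceP hP y).sSup_mem hs⟩, rfl, hw⟩, rfl⟩
  · rintro ⟨⟨⟨x, y⟩, ⟨x', y'⟩⟩, ⟨⟨hp, hp'⟩, rfl : y = y', hw⟩, rfl⟩
    have hy : y ∈ Icc (gamP P) (delP P) := image_snd_eq_Icc hP hconv hne ▸ ⟨_, hp, rfl⟩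
    exact ⟨hy.1, hy.2, by linarith [lftP_le hP hp, le_rgtP hP hp']⟩

theorem isCompact_lvlP (hP : IsCompact P) (hconv : Convex ℝ P) (hne : P.Nonempty) (t : ℝ) :
    IsCompact (lvlP P t) := by
  rw [lvlP_eq_image hP hconv hne]
  refine ((hP.prod hP).inter_right ?_).image (by fun_prop)
  exact (isClosed_eq (by fun_prop) (by fun_prop)).inter (isClosed_le continuous_const
    ((continuous_fst.comp continuous_snd).sub (continuous_fst.comp continuous_fst)))

theorem convex_lvlP (hP : IsCompact P) (hconv : Convex ℝ P) (hne : P.Nonempty) (t : ℝ) :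
    Convex ℝ (lvlP P t) := by
  rw [lvlP_eq_image hP hconv hne]
  refine ((hconv.prod hconv).inter ?_).linear_image (LinearMap.snd ℝ ℝ ℝ ∘ₗ LinearMap.fst ℝ _ _)
  rintro q ⟨hq, hq'⟩ q' ⟨hr, hr'⟩ a b ha hb hab
  simp only [mem_ofPred_eq, Prod.fst_add, Prod.snd_add, Prod.smul_fst, Prod.smul_snd, smul_eq_mul]
  refine ⟨by rw [hq, hr], ?_⟩
  have ht : t = a * t + b * t := by rw [← add_mul, hab, one_mul]
  linarith [mul_le_mul_of_nonneg_left hq' ha, mul_le_mul_of_nonneg_left hr' hb]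

theorem antitone_lvlP : Antitone (lvlP P) :=
  fun _ _ hst _ ⟨hγ, hδ, hw⟩ ↦ ⟨hγ, hδ, hst.trans hw⟩

theorem sub_bP_mem_Icc_iff (hP : IsCompact P) (hconv : Convex ℝ P) (hne : P.Nonempty)
    (h : (lvlP P t).Nonempty) : y - bP P t ∈ Icc 0 (gP P t) ↔ y ∈ lvlP P t := by
  set s := sSup (lvlP P t)
  have hI : lvlP P t = Icc (bP P t) s :=
    eq_Icc_of_connected_compact ((convex_lvlP hP hconv hne t).isConnected h)
      (isCompact_lvlP hP hconv hne t)
  have hbs : bP P t ≤ s := nonempty_Icc.1 (hI ▸ h)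
  have hg : gP P t = s - bP P t := by
    rw [gP, hI, Real.volume_Icc, ENNReal.toReal_ofReal (sub_nonneg.2 hbs)]
  rw [hg, hI, mem_Icc, mem_Icc, sub_nonneg, sub_le_sub_iff_right]

theorem measurable_lftP (hP : IsCompact P) : Measurable (lftP P) := by
  change Measurable fun y ↦ sInf (sliceP P y)
  refine measurable_sInf_of_isClosed (fun y ↦ (isCompact_sliceP hP y).isClosed)
    (fun y ↦ (isCompact_sliceP hP y).bddBelow) fun a ↦ ?_
  have h : {y | (sliceP P y ∩ Iic a).Nonempty} = Prod.snd '' (P ∩ {p | p.1 ≤ a}) := by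
    ext y
    simp [sliceP, Set.Nonempty, and_comm]
  rw [h]
  exact ((hP.inter_right (isClosed_le continuous_fst continuous_const)).image
    continuous_snd).measurableSet

theorem measurable_bP (hP : IsCompact P) (hconv : Convex ℝ P) (hne : P.Nonempty) :
    Measurable (bP P) := by
  refine measurable_sInf_of_isClosed (fun t ↦ (isCompact_lvlP hP hconv hne t).isClosed)
    (fun t ↦ (isCompact_lvlP hP hconv hne t).bddBelow) fun a ↦ ?_
  have h : IsLowerSet {t | (lvlP P t ∩ Iic a).Nonempty} :=
    fun _ _ hst ⟨y, hy, hya⟩ ↦ ⟨y, antitone_lvlP hst hy, hya⟩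
  exact h.ordConnected.measurableSet

noncomputable def psiEquiv (hl : Measurable (lftP P)) (hb : Measurable (bP P)) :
    (ℝ × ℝ) ≃ᵐ ℝ × ℝ :=
  ((MeasurableEquiv.prodComm.trans (.prodShearSub hl)).trans .prodComm).trans (.prodShearSub hb)

theorem coe_psiEquiv (hl : Measurable (lftP P)) (hb : Measurable (bP P)) :
    ⇑(psiEquiv hl hb) = PsiP P :=
  rfl

theorem measurePreserving_psiEquiv (hl : Measurable (lftP P)) (hb : Measurable (bP P)) :
    MeasurePreserving (psiEquiv hl hb) := by
  rw [Measure.volume_eq_prod]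
  exact (measurePreserving_prodShearSub hb _ _).comp (Measure.measurePreserving_swap.comp
    ((measurePreserving_prodShearSub hl _ _).comp Measure.measurePreserving_swap))

theorem image_psiP (hP : IsCompact P) (hconv : Convex ℝ P) (hne : P.Nonempty) :
    PsiP P '' P =
      {q : ℝ × ℝ | 0 ≤ q.1 ∧ (lvlP P q.1).Nonempty ∧ 0 ≤ q.2 ∧ q.2 ≤ gP P q.1} := by
  ext ⟨t, h⟩
  simp only [mem_image, mem_ofPred_eq]
  constructor
  · rintro ⟨⟨x, y⟩, hp, hq⟩
    simp only [PsiP, Prod.mk.injEq] at hq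
    obtain ⟨rfl, rfl⟩ := hq
    have ht : 0 ≤ x - lftP P y := sub_nonneg.2 (lftP_le hP hp)
    have hy : y ∈ lvlP P (x - lftP P y) := (mem_lvlP_iff hP hconv hne ht).2 (by simpa using hp)
    exact ⟨ht, ⟨y, hy⟩, (sub_bP_mem_Icc_iff hP hconv hne ⟨y, hy⟩).2 hy⟩
  · rintro ⟨ht, hlvl, hh⟩
    have hy : h + bP P t ∈ lvlP P t :=
      (sub_bP_mem_Icc_iff hP hconv hne hlvl).1 (by simpa using hh)
    exact ⟨(lftP P _ + t, _), (mem_lvlP_iff hP hconv hne ht).1 hy, by simp [PsiP]⟩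

end ConvexBody

/-- For a compact convex `P ⊆ ℝ²` with nonempty interior, the double shear `Ψ`
is injective on `P`, maps `P` onto `{(t,h) : t ≥ 0, lvl(t) ≠ ∅, 0 ≤ h ≤ g(t)}`,
and preserves two-dimensional Lebesgue measure. -/
theorem psi_injective_image_measurePreserving (P : Set (ℝ × ℝ))
    (hP : IsCompact P) (hconv : Convex ℝ P) (hint : (interior P).Nonempty) :
    Set.InjOn (PsiP P) P ∧
    PsiP P '' P = {q : ℝ × ℝ | 0 ≤ q.1 ∧ (lvlP P q.1).Nonempty ∧
      0 ≤ q.2 ∧ q.2 ≤ gP P q.1} ∧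
    ∀ A ⊆ P, MeasurableSet A →
      MeasurableSet (PsiP P '' A) ∧ volume (PsiP P '' A) = volume A := by
  have hne : P.Nonempty := hint.mono interior_subset
  have hl := measurable_lftP hP
  have hb := measurable_bP hP hconv hne
  refine ⟨coe_psiEquiv hl hb ▸ (psiEquiv hl hb).injective.injOn, image_psiP hP hconv hne,
    fun A _ hA ↦ ?_⟩
  rw [← coe_psiEquiv hl hb, MeasurableEquiv.image_eq_preimage_symm]
  exact ⟨(psiEquiv hl hb).symm.measurable hA,
    (measurePreserving_psiEquiv hl hb).symm.measure_preimage_equiv A⟩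
end

section
/- Let p ∈ ℂ[X,Y] and let (a,b) ∈ ℕ² be an element of the support of p such that for every (c,d) in the support of p with a ≤ c and b ≤ d one has (c,d) = (a,b). Then p does not lie in I^{a+b+1}, where I is the ideal of ℂ[X,Y] generated by X−1 and Y−1; equivalently, the order of vanishing of p at the point (1,1) is at most a+b. -/
/-!
The substitution `Xᵢ ↦ Xᵢ + 1` carries `I = (Xᵢ - 1)ᵢ` onto the ideal of the variables, whose
`n`-th power consists of the polynomials without monomials of total degree `< n`. On the other
hand the coefficient of `X^t` in `p(X + 1)` is `∑ₘ cₘ ∏ᵢ (mᵢ choose tᵢ)`, which only involves the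
exponents `m ≥ t` of `p`; if `t` is maximal in the support, this is `c_t ≠ 0`.
-/

open MvPolynomial

namespace MvPolynomial

variable {σ R : Type*}

section CommSemiring

variable [CommSemiring R]

lemma X_add_one_pow_eq_sum_monomial (i : σ) (n : ℕ) :
    (X i + 1 : MvPolynomial σ R) ^ n =
      ∑ k ∈ Finset.range (n + 1), monomial (Finsupp.single i k) (n.choose k : R) := by
  rw [add_pow]
  refine Finset.sum_congr rfl fun k _ => ?_
  rw [one_pow, mul_one, X_pow_eq_monomial, ← map_natCast (C : R →+* _), mul_comm, C_mul_monomial,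
    mul_one]

lemma coeff_prod_X_add_one_pow [Fintype σ] (m t : σ →₀ ℕ) :
    coeff t (∏ i, (X i + 1 : MvPolynomial σ R) ^ m i) = ∏ i, ((m i).choose (t i) : R) := by
  classical
  have hsum (x : σ → ℕ) : (∑ i, Finsupp.single i (x i)) = t ↔ x = ⇑t := by
    constructor
    · rintro rfl; ext i; simp [Finsupp.finsetSum_apply, Finsupp.single_apply]
    · rintro rfl; exact Finsupp.univ_sum_single t
  simp_rw [X_add_one_pow_eq_sum_monomial, Finset.prod_univ_sum, ← monomial_sum_prod, coeff_sum,
    coeff_monomial, hsum, Finset.sum_ite_eq']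
  split_ifs with ht
  · rfl
  · obtain ⟨i, hi⟩ : ∃ i, m i < t i := by simpa [Fintype.mem_piFinset, Nat.lt_succ_iff] using ht
    exact (Finset.prod_eq_zero (Finset.mem_univ i) (by simp [Nat.choose_eq_zero_of_lt hi])).symm

lemma coeff_aeval_X_add_one [Fintype σ] (p : MvPolynomial σ R) (t : σ →₀ ℕ) :
    coeff t (aeval (fun i => X i + 1) p) =
      ∑ m ∈ p.support, coeff m p * ∏ i, ((m i).choose (t i) : R) := by
  conv_lhs => rw [p.as_sum]
  simp only [map_sum, aeval_monomial, coeff_sum, algebraMap_eq, coeff_C_mul,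
    Finsupp.prod_fintype _ _ (fun _ => pow_zero _), coeff_prod_X_add_one_pow]

end CommSemiring

section CommRing

variable [CommRing R]

lemma map_aeval_X_add_one_span_X_sub_one :
    Ideal.map (aeval fun i => X i + 1 : MvPolynomial σ R →ₐ[R] MvPolynomial σ R)
      (Ideal.span (Set.range fun i => X i - 1)) = idealOfVars σ R := by
  rw [Ideal.map_span, ← Set.range_comp]
  simp [Function.comp_def]

theorem notMem_span_X_sub_one_pow_of_maximal_mem_support [Fintype σ]
    {p : MvPolynomial σ R} {t : σ →₀ ℕ} (ht : t ∈ p.support)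
    (hmax : ∀ m ∈ p.support, t ≤ m → m = t) :
    p ∉ Ideal.span (Set.range fun i => X i - 1) ^ (t.degree + 1) := by
  intro hp
  set φ : MvPolynomial σ R →ₐ[R] MvPolynomial σ R := aeval fun i => X i + 1
  have hφp : φ p ∈ idealOfVars σ R ^ (t.degree + 1) := by
    rw [← map_aeval_X_add_one_span_X_sub_one, ← Ideal.map_pow]
    exact Ideal.mem_map_of_mem φ hp
  have hcoeff : coeff t (φ p) = coeff t p := by
    rw [coeff_aeval_X_add_one, Finset.sum_eq_single_of_mem t ht]
    · simp
    · intro m hm hmt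
      obtain ⟨i, hi⟩ : ∃ i, m i < t i := by
        by_contra! hle
        exact hmt (hmax m hm hle)
      rw [Finset.prod_eq_zero (Finset.mem_univ i) (by simp [Nat.choose_eq_zero_of_lt hi]),
        mul_zero]
  exact mem_support_iff.mp ht <|
    hcoeff ▸ (mem_pow_idealOfVars_iff' _ _).mp hφp t (Nat.lt_succ_self _)

end CommRing

end MvPolynomial

/-- If `(a,b)` lies in the support of `p` and is the only element `(c,d)` of
the support with `a ≤ c` and `b ≤ d`, then `p ∉ I^{a+b+1}` where
`I = (X−1, Y−1)`; i.e. the order of vanishing of `p` at `(1,1)` is at most `a+b`. -/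
theorem not_mem_ideal_pow_of_lex_max_support (p : MvPolynomial (Fin 2) ℂ) (a b : ℕ)
    (hmem : (Finsupp.single 0 a + Finsupp.single 1 b : Fin 2 →₀ ℕ) ∈ p.support)
    (h : ∀ m ∈ p.support, a ≤ m 0 → b ≤ m 1 → m 0 = a ∧ m 1 = b) :
    p ∉ (Ideal.span {MvPolynomial.X 0 - 1, MvPolynomial.X 1 - 1} :
        Ideal (MvPolynomial (Fin 2) ℂ)) ^ (a + b + 1) := by
  have hspan : ({X 0 - 1, X 1 - 1} : Set (MvPolynomial (Fin 2) ℂ)) =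
      Set.range fun i => X i - 1 := by
    ext q
    simp [Fin.exists_fin_two, eq_comm]
  have hdeg : (Finsupp.single 0 a + Finsupp.single 1 b : Fin 2 →₀ ℕ).degree = a + b := by
    simp
  rw [hspan, ← hdeg]
  refine notMem_span_X_sub_one_pow_of_maximal_mem_support hmem fun m hm hle => ?_
  obtain ⟨h0, h1⟩ := h m hm (by simpa using hle 0) (by simpa using hle 1)
  ext i
  fin_cases i <;> simp [h0, h1]
end
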